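/- arXiv:1201.0365 — 4 statements merged into one kernel-verified Lean document; each statement's English description precedes it below -/
import Mathlib

section
/- For any transposition τ(i,j,l) of {1,2,…,n} with 1 ≤ i < j < l ≤ n+1, its image under the map f is the 3-cycle overline(τ(i,j,l)) = (i,l,j), i.e. the permutation of {0,1,…,n} mapping i ↦ l, l ↦ j, j ↦ i and fixing all other elements. -/
/-- The (n+1)-cycle (0,1,2,…,n) on {0,1,…,n} = `Fin (n+1)`, mapping x to x+1 (mod n+1). -/
def rho (n : ℕ) : Equiv.Perm (Fin (n + 1)) :=
  finRotate (n + 1)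

/-- For a permutation `π` of {0,1,…,n} fixing 0 (the extension of a permutation of {1,…,n}),
`ob n π` is `overline(π) = ρ ∘ β_π`, where `β_π = π ∘ ρ⁻¹ ∘ π⁻¹` is precisely the
(n+1)-cycle (0, π_n, π_{n−1}, …, π_1): it sends 0 ↦ π_n, π_i ↦ π_{i−1} (2 ≤ i ≤ n),
and π_1 ↦ 0. -/
def ob (n : ℕ) (π : Equiv.Perm (Fin (n + 1))) : Equiv.Perm (Fin (n + 1)) :=
  rho n * (π * (rho n)⁻¹ * π⁻¹)

/-- `IsGRTransposition n i j l τ` says that `τ` (a permutation of {0,1,…,n} fixing 0,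
representing a permutation of {1,…,n}) is the (genome-rearrangement) transposition
τ(i,j,l) with 1 ≤ i < j < l ≤ n+1, i.e. its one-line notation on positions 1,…,n is
⟨1,…,i−1, j,…,l−1, i,…,j−1, l,…,n⟩. -/
def IsGRTransposition (n i j l : ℕ) (τ : Equiv.Perm (Fin (n + 1))) : Prop :=
  1 ≤ i ∧ i < j ∧ j < l ∧ l ≤ n + 1 ∧
  (∀ p : Fin (n + 1), (p : ℕ) < i → τ p = p) ∧
  (∀ p : Fin (n + 1), i ≤ (p : ℕ) → (p : ℕ) < i + (l - j) →
      (τ p : ℕ) = j + ((p : ℕ) - i)) ∧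
  (∀ p : Fin (n + 1), i + (l - j) ≤ (p : ℕ) → (p : ℕ) < l →
      (τ p : ℕ) = i + ((p : ℕ) - (i + (l - j)))) ∧
  (∀ p : Fin (n + 1), l ≤ (p : ℕ) → τ p = p)

/-!
Since `ob n π = ρ π ρ⁻¹ π⁻¹`, we have `ob n π (π y) = π (y - 1) + 1`: the map `ob n π` sends each
entry of the one-line notation of `π` (read cyclically, with `π 0 = 0`) to the preceding entry
plus one. For `τ = τ(i,j,l)` consecutive entries differ by one except at the three breakpoints,
where the entries are `i`, `l` and `j` and the preceding entries plus one are `l`, `j` and `i`.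

Positions are best read in `{1, …, n+1}`, with `n+1` standing for `0`: there the one-line
formula of `τ(i,j,l)` holds uniformly, also when `l = n+1`, and the cast to `Fin (n+1)` is injective.
-/

open Fin.NatCast

def cycle3 {α : Type*} [DecidableEq α] (a b c x : α) : α :=
  if x = a then b else if x = b then c else if x = c then a else x

theorem Set.InjOn.map_cycle3 {α β : Type*} [DecidableEq α] [DecidableEq β] {f : α → β}
    {s : Set α} (hf : Set.InjOn f s) {a b c x : α} (ha : a ∈ s) (hb : b ∈ s) (hc : c ∈ s)
    (hx : x ∈ s) : f (cycle3 a b c x) = cycle3 (f a) (f b) (f c) (f x) := by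
  unfold cycle3
  simp only [hf.eq_iff hx ha, hf.eq_iff hx hb, hf.eq_iff hx hc]
  split_ifs <;> rfl

theorem Fin.natCast_injOn_Icc (n : ℕ) :
    Set.InjOn (Nat.cast : ℕ → Fin (n + 1)) (Set.Icc 1 (n + 1)) := by
  have hval : ∀ a ∈ Set.Icc 1 (n + 1), ((a : Fin (n + 1)) : ℕ) = if a = n + 1 then 0 else a := by
    rintro a ⟨-, ha⟩
    split_ifs with h
    · simp [h]
    · exact Fin.val_cast_of_lt (by omega)
  intro a ha b hb hab
  have := congrArg Fin.val hab
  rw [hval a ha, hval b hb] at this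
  obtain ⟨ha₁, -⟩ := ha
  obtain ⟨hb₁, -⟩ := hb
  split_ifs at this <;> omega

theorem ob_apply_apply (n : ℕ) (π : Equiv.Perm (Fin (n + 1))) (y : Fin (n + 1)) :
    ob n π (π y) = π (y - 1) + 1 := by
  simp [ob, rho, finRotate_apply]

/-- The one-line notation `⟨1,…,i−1, j,…,l−1, i,…,j−1, l,…⟩` of `τ(i,j,l)`, on all of `ℕ`. -/
def grTranspositionVal (i j l p : ℕ) : ℕ :=
  if p < i then p
  else if p < i + (l - j) then j + (p - i)
  else if p < l then i + (p - (i + (l - j)))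
  else p

section grTranspositionVal

variable {i j l : ℕ}

theorem grTranspositionVal_mem_Icc (hi : 1 ≤ i) (hij : i < j) {n p : ℕ} (hl : l ≤ n + 1)
    (hp : p ∈ Set.Icc 1 (n + 1)) : grTranspositionVal i j l p ∈ Set.Icc 1 (n + 1) := by
  obtain ⟨hp1, hpn⟩ := hp
  unfold grTranspositionVal
  constructor <;> split_ifs <;> omega

theorem grTranspositionVal_add_one (hij : i < j) (hjl : j < l) (p : ℕ) :
    grTranspositionVal i j l p + 1 = cycle3 i l j (grTranspositionVal i j l (p + 1)) := by
  unfold grTranspositionVal cycle3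
  split_ifs <;> omega

end grTranspositionVal

theorem IsGRTransposition.apply_natCast {n i j l : ℕ} {τ : Equiv.Perm (Fin (n + 1))}
    (h : IsGRTransposition n i j l τ) {p : ℕ} (hp : p ≤ n + 1) :
    τ (p : Fin (n + 1)) = (grTranspositionVal i j l p : Fin (n + 1)) := by
  obtain ⟨hi, hij, -, hl, hfix₁, hmid₁, hmid₂, hfix₂⟩ := h
  rcases hp.lt_or_eq with hp | rfl
  · have hpv : ((p : Fin (n + 1)) : ℕ) = p := Fin.val_cast_of_lt hp
    unfold grTranspositionVal
    split_ifs
    · exact hfix₁ _ (by omega)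
    · exact Fin.ext <| by
        rw [hmid₁ _ (by omega) (by omega), hpv, Fin.val_cast_of_lt (by omega)]
    · exact Fin.ext <| by
        rw [hmid₂ _ (by omega) (by omega), hpv, Fin.val_cast_of_lt (by omega)]
    · exact hfix₂ _ (by omega)
  · have hval : grTranspositionVal i j l (n + 1) = n + 1 := by
      unfold grTranspositionVal
      split_ifs <;> omega
    rw [hval, Fin.natCast_self]
    exact hfix₁ 0 (by simp; omega)

open Fin.NatCast in
/-- the image of the transposition τ(i,j,l) under the map f is the
3-cycle (i,l,j) of {0,1,…,n}, mapping i ↦ l, l ↦ j, j ↦ i and fixing everything else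
(the numbers being taken mod n+1, which only affects l = n+1, identified with 0). -/
theorem overline_transposition (n i j l : ℕ) (τ : Equiv.Perm (Fin (n + 1)))
    (h : IsGRTransposition n i j l τ) :
    ∀ x : Fin (n + 1), ob n τ x =
      if x = (i : Fin (n + 1)) then (l : Fin (n + 1))
      else if x = (l : Fin (n + 1)) then (j : Fin (n + 1))
      else if x = (j : Fin (n + 1)) then (i : Fin (n + 1))
      else x := by
  obtain ⟨hi, hij, hjl, hl, -⟩ := id h
  intro x
  change _ = cycle3 (i : Fin (n + 1)) l j x
  obtain ⟨y, rfl⟩ := τ.surjective x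
  obtain ⟨p, hp, rfl⟩ : ∃ p < n + 1, y = ((p + 1 : ℕ) : Fin (n + 1)) :=
    ⟨(y - 1 : Fin (n + 1)), Fin.is_lt _, by simp⟩
  calc ob n τ (τ ((p + 1 : ℕ) : Fin (n + 1)))
      = τ p + 1 := by rw [ob_apply_apply, Nat.cast_add_one, add_sub_cancel_right]
    _ = ((grTranspositionVal i j l p + 1 : ℕ) : Fin (n + 1)) := by
      rw [h.apply_natCast hp.le, Nat.cast_add_one]
    _ = cycle3 (i : Fin (n + 1)) l j ((grTranspositionVal i j l (p + 1) : ℕ) : Fin (n + 1)) := by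
      rw [grTranspositionVal_add_one hij hjl]
      exact (Fin.natCast_injOn_Icc n).map_cycle3 ⟨hi, by omega⟩ ⟨by omega, hl⟩
        ⟨by omega, by omega⟩ (grTranspositionVal_mem_Icc hi hij hl ⟨by omega, by omega⟩)
    _ = cycle3 (i : Fin (n + 1)) l j (τ ((p + 1 : ℕ) : Fin (n + 1))) := by
      rw [h.apply_natCast (by omega)]
end

section
/- For every permutation π of {1,2,…,n}, the lower bound (n + 1 + c(overline(π)))/2 − c₁(overline(π)) − ε (where ε = 0 if π_1 = 1 and ε = 1 otherwise) is at least ⌈(ptb(π) − 1)/2⌉; that is, the cycle-based lower bound on the prefix transposition distance always exceeds or equals the breakpoint-based lower bound of Dias and Meidanis. -/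
/-- The number of fixed points c₁(σ) of a permutation σ. -/
def fixedPointCount {m : ℕ} (σ : Equiv.Perm (Fin m)) : ℕ :=
  (Finset.univ.filter fun x => σ x = x).card

/-- The number of cycles c(σ) of a permutation σ, counting fixed points as 1-cycles
(`Equiv.Perm.cycleType` lists the lengths of the cycles of length ≥ 2). -/
def cycleCount {m : ℕ} (σ : Equiv.Perm (Fin m)) : ℕ :=
  σ.cycleType.card + fixedPointCount σ

/-- The number of odd-length cycles c_odd(σ) of a permutation σ, counting fixed points
as (odd) 1-cycles. -/
def oddCycleCount {m : ℕ} (σ : Equiv.Perm (Fin m)) : ℕ :=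
  (σ.cycleType.filter fun k => Odd k).card + fixedPointCount σ

/-- The extended sequence π̃ = ⟨0 π_1 π_2 ⋯ π_n (n+1)⟩ of a permutation π of {1,…,n}
(given as a permutation of {0,1,…,n} fixing 0), as a function on indices 0,…,n+1. -/
def ptilde (n : ℕ) (π : Equiv.Perm (Fin (n + 1))) (m : ℕ) : ℕ :=
  if h : m < n + 1 then (π ⟨m, h⟩ : ℕ) else n + 1

/-- The number ptb(π) of prefix transposition breakpoints of π: the number of indices
0 ≤ i ≤ n such that the pair (π̃_i, π̃_{i+1}) is a breakpoint, i.e. i = 0 or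
π̃_{i+1} ≠ π̃_i + 1. -/
def ptb (n : ℕ) (π : Equiv.Perm (Fin (n + 1))) : ℕ :=
  ((Finset.range (n + 1)).filter fun m =>
    m = 0 ∨ ptilde n π (m + 1) ≠ ptilde n π m + 1).card

/-!
`overline(π)` is the commutator `⁅ρ, π⁆`, hence an even permutation: if its nontrivial cycles
have total length `s` and number `k`, then `s + k` is even. Its fixed points `π (ρ j)` correspond
to the `j` with `π(j + 1) = π(j) + 1` cyclically, i.e. to the pairs of `π̃` that are not
breakpoints, plus `j = 0` when `π₁ = 1`. So `ptb(π) + c₁ = n + 1 + [π₁ = 1]`, the cycle bound is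
the integer `(s + k)/2 - ε`, and the claim reduces to `k ≥ 0`, resp. to `k ≥ 1` when `π₁ ≠ 1`,
which holds because then `overline(π)` moves `π₁`.
-/

open Equiv Finset
open scoped commutatorElement

namespace Equiv.Perm

variable {α : Type*} [Fintype α] [DecidableEq α]

theorem sum_cycleType_add_card_fixed (σ : Perm α) :
    σ.cycleType.sum + #{x | σ x = x} = Fintype.card α := by
  rw [sum_cycleType, add_comm]
  exact card_filter_add_card_filter_not (fun x => σ x = x)

theorem card_fixed_commutatorElement (a b : Perm α) :
    #{x | ⁅a, b⁆ x = x} = #{x | a (b x) = b (a x)} := by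
  symm
  refine card_equiv (b * a : Perm α) fun x => ?_
  simp [commutatorElement_def, eq_comm]

theorem even_sum_add_card_cycleType_commutatorElement (a b : Perm α) :
    Even (⁅a, b⁆.cycleType.sum + Multiset.card ⁅a, b⁆.cycleType) := by
  rw [← neg_one_pow_eq_one_iff_even (R := ℤˣ) (by decide), ← sign_of_cycleType,
    map_commutatorElement, commutatorElement_eq_one_iff_mul_comm]
  exact mul_comm _ _

end Equiv.Perm

theorem Finset.card_filter_eq_or_not_add_card_filter {α : Type*} [Fintype α] [DecidableEq α]
    (p : α → Prop) [DecidablePred p] (a : α) :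
    #{x | x = a ∨ ¬ p x} + #{x | p x} = Fintype.card α + if p a then 1 else 0 := by
  rw [← card_univ, ← card_filter_add_card_filter_not p (s := univ), add_comm #{x | p x},
    add_right_comm]
  congr 1
  split_ifs with ha
  · rw [filter_or, filter_eq', if_pos (mem_univ a), ← insert_eq,
      card_insert_of_notMem (by simp [ha])]
  · simp only [filter_or, filter_eq', mem_univ, if_true, ← insert_eq]
    rw [insert_eq_of_mem (by simpa), add_zero]

theorem Fin.add_one_eq_iff_val_add_one_eq {n : ℕ} (a b : Fin (n + 1)) :
    a + 1 = b ↔ (a : ℕ) + 1 = if b = 0 then n + 1 else b := by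
  rw [Fin.ext_iff, Fin.val_add_one]
  split_ifs with ha hb hb
  · subst ha hb; simp only [Fin.val_last, Fin.val_zero]
  · subst ha; rw [Fin.ext_iff, Fin.val_zero] at hb; rw [Fin.val_last]; omega
  · subst hb; rw [Fin.ext_iff, Fin.val_last] at ha; rw [Fin.val_zero]; omega
  · rfl

theorem rho_apply (n : ℕ) (x : Fin (n + 1)) : rho n x = x + 1 :=
  finRotate_apply x

theorem ob_eq_commutatorElement (n : ℕ) (π : Perm (Fin (n + 1))) : ob n π = ⁅rho n, π⁆ := by
  rw [ob, commutatorElement_def, mul_assoc, mul_assoc, mul_assoc]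

section
variable {n : ℕ} {π : Perm (Fin (n + 1))}

theorem ptilde_val (j : Fin (n + 1)) : ptilde n π j = π j :=
  dif_pos j.isLt

-- The wrap-around value `π (rho n (Fin.last n)) = 0` is read as the sentinel `π̃_{n+1} = n + 1`.
theorem ptilde_succ (hπ : π 0 = 0) (j : Fin (n + 1)) :
    ptilde n π (j + 1) = if π (rho n j) = 0 then n + 1 else π (rho n j) := by
  have hzero : π (rho n j) = 0 ↔ j = Fin.last n := by
    rw [← hπ, π.apply_eq_iff_eq, rho_apply, Fin.add_one_eq_iff_val_add_one_eq, if_pos rfl,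
      Fin.ext_iff, Fin.val_last, Nat.add_right_cancel_iff]
  unfold ptilde
  by_cases hj : j = Fin.last n
  · subst hj
    rw [dif_neg (by simp), if_pos (hzero.2 rfl)]
  · have hlt : (j : ℕ) + 1 < n + 1 := Nat.succ_lt_succ (Fin.val_lt_last hj)
    have hρ : rho n j = ⟨j + 1, hlt⟩ := Fin.ext (by rw [rho_apply, Fin.val_add_one, if_neg hj])
    rw [dif_pos hlt, if_neg (mt hzero.1 hj), hρ]

theorem ptilde_succ_eq_iff (hπ : π 0 = 0) (j : Fin (n + 1)) :
    ptilde n π (j + 1) = ptilde n π j + 1 ↔ rho n (π j) = π (rho n j) := by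
  rw [ptilde_succ hπ, ptilde_val, rho_apply n (π j), Fin.add_one_eq_iff_val_add_one_eq,
    eq_comm]

theorem ptb_eq_card (hπ : π 0 = 0) :
    ptb n π = #{j | j = 0 ∨ ¬ rho n (π j) = π (rho n j)} := by
  rw [ptb, card_filter, card_filter, ← Fin.sum_univ_eq_sum_range]
  simp only [Fin.val_eq_zero_iff, ne_eq, ptilde_succ_eq_iff hπ]

theorem ptb_add_fixedPointCount_ob (hπ : π 0 = 0) :
    ptb n π + fixedPointCount (ob n π) = n + 1 + if π 1 = 1 then 1 else 0 := by
  have h0 : rho n (π 0) = π (rho n 0) ↔ π 1 = 1 := by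
    rw [hπ, rho_apply, zero_add, eq_comm]
  rw [ptb_eq_card hπ, fixedPointCount, ob_eq_commutatorElement,
    Perm.card_fixed_commutatorElement, card_filter_eq_or_not_add_card_filter, Fintype.card_fin]
  simp only [h0]

theorem ob_apply_apply_one (hπ : π 0 = 0) : ob n π (π 1) = 1 := by
  have h : (rho n).symm 1 = 0 := by rw [Equiv.symm_apply_eq, rho_apply, zero_add]
  simp [ob, h, hπ, rho_apply]

theorem ob_ne_one (hπ : π 0 = 0) (h1 : π 1 ≠ 1) : ob n π ≠ 1 :=
  fun h => h1 (by simpa [h] using ob_apply_apply_one hπ)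

end

/-- for every permutation π of {1,…,n} (extended to {0,…,n} by fixing 0),
the cycle-based lower bound (n + 1 + c(overline(π)))/2 − c₁(overline(π)) − ε
(with ε = 0 if π_1 = 1 and ε = 1 otherwise) is at least the breakpoint-based lower
bound ⌈(ptb(π) − 1)/2⌉ of Dias and Meidanis. -/
theorem cycle_bound_ge_breakpoint_bound (n : ℕ) (π : Equiv.Perm (Fin (n + 1)))
    (hπ : π 0 = 0) :
    (⌈((ptb n π : ℚ) - 1) / 2⌉ : ℚ) ≤
      ((n : ℚ) + 1 + cycleCount (ob n π)) / 2 - fixedPointCount (ob n π) -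
        (if π 1 = 1 then 0 else 1) := by
  set σ := ob n π
  have hsum : (σ.cycleType.sum + fixedPointCount σ : ℚ) = n + 1 := by
    exact_mod_cast σ.sum_cycleType_add_card_fixed.trans (Fintype.card_fin _)
  have hcount : (ptb n π + fixedPointCount σ : ℚ) = n + 1 + if π 1 = 1 then 1 else 0 := by
    exact_mod_cast ptb_add_fixedPointCount_ob hπ
  obtain ⟨t, ht⟩ : Even (σ.cycleType.sum + Multiset.card σ.cycleType) := by
    simpa only [σ, ob_eq_commutatorElement] using
      Perm.even_sum_add_card_cycleType_commutatorElement (rho n) π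
  have ht' : (σ.cycleType.sum + Multiset.card σ.cycleType : ℚ) = t + t := by exact_mod_cast ht
  have hbound : ((n : ℚ) + 1 + cycleCount σ) / 2 - fixedPointCount σ -
      (if π 1 = 1 then 0 else 1) = ((t - if π 1 = 1 then 0 else 1 : ℤ) : ℚ) := by
    rw [cycleCount]
    split_ifs <;> push_cast <;> linarith
  rw [hbound, Int.cast_le, Int.ceil_le]
  split_ifs at hcount ⊢ with h1
  · push_cast; linarith
  · have hcycles : (1 : ℚ) ≤ Multiset.card σ.cycleType := by
      exact_mod_cast Multiset.card_pos.2 (mt Perm.cycleType_eq_zero.1 (ob_ne_one hπ h1))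
    push_cast; linarith
end

section
/- For every permutation π of {1,2,…,n}, the inequality 2·c(π) ≤ n − 1 + c(overline(π)) holds, where c(π) is the number of cycles (including fixed points) of π as a permutation of {1,…,n}, and c(overline(π)) is the number of cycles (including fixed points) of the permutation overline(π) of {0,1,…,n}. -/
/-- The number of fixed points of σ among the elements {1,…,n}, i.e. c₁(σ) for σ viewed
as a permutation of {1,…,n} (σ is a permutation of {0,1,…,n} fixing 0). -/
def fixedPointCountPos (n : ℕ) (σ : Equiv.Perm (Fin (n + 1))) : ℕ :=
  (Finset.univ.filter fun x : Fin (n + 1) => x ≠ 0 ∧ σ x = x).card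

/-- The number of cycles c(σ) of σ viewed as a permutation of {1,…,n}, counting fixed
points as 1-cycles. -/
def cycleCountPos (n : ℕ) (σ : Equiv.Perm (Fin (n + 1))) : ℕ :=
  σ.cycleType.card + fixedPointCountPos n σ

/-- The number of odd-length cycles c_odd(σ) of σ viewed as a permutation of {1,…,n},
counting fixed points as (odd) 1-cycles. -/
def oddCycleCountPos (n : ℕ) (σ : Equiv.Perm (Fin (n + 1))) : ℕ :=
  (σ.cycleType.filter fun k => Odd k).card + fixedPointCountPos n σ

/-!
The number of cycles c(σ) of a permutation σ of a finite set X is the dimension of the space of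
functions X → ℚ that are invariant under σ. A function invariant under σ and under τ is
invariant under στ, so the dimension formula for the sum and the intersection of two subspaces
gives c(σ) + c(τ) ≤ |X| + c(στ). On X = {0,…,n}, take σ = ρπρ⁻¹ and τ = π⁻¹, whose product is
overline(π): both have the cycles of π, that is c(π) + 1 cycles once the fixed point 0 is counted.
-/

namespace Equiv.Perm

variable {α : Type*}

section invariantFunctions

variable (K : Type*) [Field K]

def invariantFunctions (σ : Perm α) : Submodule K (α → K) where
  carrier := {f | f ∘ σ = f}
  add_mem' hf hg := by simp_all [Pi.add_comp]
  zero_mem' := rfl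
  smul_mem' c f hf := by simp_all [Pi.smul_comp]

variable {K}

theorem invariantFunctions_eq_range [Finite α] (σ : Perm α) :
    invariantFunctions K σ =
      LinearMap.range (LinearMap.funLeft K K (Quotient.mk (SameCycle.setoid σ))) := by
  ext f
  constructor
  · intro hf
    refine ⟨Quotient.lift f fun x y hxy => ?_, rfl⟩
    obtain ⟨i, rfl⟩ := hxy.exists_nat_pow_eq
    rw [coe_pow, ← Function.comp_apply (f := f), Function.iterate_invariant hf]
  · rintro ⟨g, rfl⟩
    funext x
    exact congrArg g (Quotient.sound (sameCycle_apply_left.2 (SameCycle.refl σ x)))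

theorem invariantFunctions_inf_le (σ τ : Perm α) :
    invariantFunctions K σ ⊓ invariantFunctions K τ ≤ invariantFunctions K (σ * τ) := by
  rintro f ⟨hσ, hτ⟩
  change f ∘ σ ∘ τ = f
  rw [← Function.comp_assoc, hσ, hτ]

end invariantFunctions

variable [Fintype α] [DecidableEq α]

noncomputable def cycleOrFixedPoint (σ : Perm α) (x : α) :
    σ.cycleFactorsFinset ⊕ Function.fixedPoints σ :=
  if h : σ x = x then .inr ⟨x, h⟩
  else .inl ⟨σ.cycleOf x, cycleOf_mem_cycleFactorsFinset_iff.2 (mem_support.2 h)⟩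

theorem cycleOrFixedPoint_eq_iff (σ : Perm α) {x y : α} :
    σ.cycleOrFixedPoint x = σ.cycleOrFixedPoint y ↔ σ.SameCycle x y := by
  by_cases hx : σ x = x <;> by_cases hy : σ y = y <;>
    simp only [cycleOrFixedPoint, hx, hy, dif_pos, dif_neg, not_false_eq_true, reduceCtorEq,
      Sum.inr.injEq, Sum.inl.injEq, Subtype.ext_iff, false_iff]
  · exact ⟨fun h => h ▸ SameCycle.refl σ x, fun h => h.eq_of_left hx⟩
  · exact fun h => hy (h.apply_eq_self_iff.1 hx)
  · exact fun h => hx (h.apply_eq_self_iff.2 hy)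
  · exact (sameCycle_iff_cycleOf_eq_of_mem_support (mem_support.2 hx) (mem_support.2 hy)).symm

theorem cycleOrFixedPoint_surjective (σ : Perm α) : Function.Surjective σ.cycleOrFixedPoint := by
  rintro (⟨c, hc⟩ | ⟨x, hx⟩)
  · obtain ⟨x, hxc⟩ := (mem_cycleFactorsFinset_iff.1 hc).1.nonempty_support
    have hx : σ x ≠ x := mem_support.1 (mem_cycleFactorsFinset_support_le hc hxc)
    exact ⟨x, by simp [cycleOrFixedPoint, hx, cycle_is_cycleOf hxc hc]⟩
  · exact ⟨x, by simp [cycleOrFixedPoint, hx.eq]⟩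

theorem nat_card_quotient_sameCycle (σ : Perm α) :
    Nat.card (Quotient (SameCycle.setoid σ)) = Multiset.card σ.partition.parts := by
  have hker : SameCycle.setoid σ = Setoid.ker σ.cycleOrFixedPoint :=
    Setoid.ext fun _ _ => (σ.cycleOrFixedPoint_eq_iff).symm
  rw [hker, Nat.card_congr (Setoid.quotientKerEquivOfSurjective _ σ.cycleOrFixedPoint_surjective),
    Nat.card_sum, Nat.card_eq_fintype_card, Nat.card_eq_fintype_card, card_fixedPoints,
    sum_cycleType, parts_partition, Multiset.card_add, Multiset.card_replicate, cycleType_def,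
    Multiset.card_map, Fintype.card_coe]
  rfl

variable {K : Type*} [Field K] in
theorem finrank_invariantFunctions (σ : Perm α) :
    Module.finrank K (invariantFunctions K σ) = Multiset.card σ.partition.parts := by
  have := Fintype.ofFinite (Quotient (SameCycle.setoid σ))
  rw [invariantFunctions_eq_range, LinearMap.finrank_range_of_inj
      (LinearMap.funLeft_injective_of_surjective _ _ _ Quotient.mk_surjective),
    Module.finrank_fintype_fun_eq_card, ← Nat.card_eq_fintype_card, nat_card_quotient_sameCycle]

theorem card_parts_partition_add_le (σ τ : Perm α) :
    Multiset.card σ.partition.parts + Multiset.card τ.partition.parts ≤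
      Fintype.card α + Multiset.card (σ * τ).partition.parts := by
  simp only [← finrank_invariantFunctions (K := ℚ)]
  calc _ = Module.finrank ℚ ↥(invariantFunctions ℚ σ ⊔ invariantFunctions ℚ τ) +
          Module.finrank ℚ ↥(invariantFunctions ℚ σ ⊓ invariantFunctions ℚ τ) :=
        (Submodule.finrank_sup_add_finrank_inf_eq _ _).symm
    _ ≤ Module.finrank ℚ (α → ℚ) + Module.finrank ℚ (invariantFunctions ℚ (σ * τ)) :=
        add_le_add (Submodule.finrank_le _) (Submodule.finrank_mono (invariantFunctions_inf_le σ τ))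
    _ = _ := by rw [Module.finrank_fintype_fun_eq_card]

end Equiv.Perm

section cycleCount

open Equiv Perm

theorem cycleCount_eq_card_parts_partition {m : ℕ} (σ : Perm (Fin m)) :
    cycleCount σ = Multiset.card σ.partition.parts := by
  rw [cycleCount, fixedPointCount, parts_partition, Multiset.card_add,
    Multiset.card_replicate, ← Finset.card_compl, support, Finset.compl_filter]
  simp only [not_not]

theorem cycleCount_add_le {m : ℕ} (σ τ : Perm (Fin m)) :
    cycleCount σ + cycleCount τ ≤ m + cycleCount (σ * τ) := by
  simpa only [cycleCount_eq_card_parts_partition, Fintype.card_fin]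
    using card_parts_partition_add_le σ τ

theorem cycleCount_eq_of_isConj {m : ℕ} {σ τ : Perm (Fin m)} (h : IsConj σ τ) :
    cycleCount σ = cycleCount τ := by
  rw [cycleCount_eq_card_parts_partition, cycleCount_eq_card_parts_partition,
    partition_eq_of_isConj.1 h]

theorem cycleCount_conj {m : ℕ} (σ τ : Perm (Fin m)) : cycleCount (τ * σ * τ⁻¹) = cycleCount σ :=
  (cycleCount_eq_of_isConj (isConj_iff.2 ⟨τ, rfl⟩)).symm

theorem cycleCount_inv {m : ℕ} (σ : Perm (Fin m)) : cycleCount σ⁻¹ = cycleCount σ :=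
  cycleCount_eq_of_isConj (isConj_iff_cycleType_eq.2 (cycleType_inv σ))

theorem cycleCount_eq_cycleCountPos_add_one {n : ℕ} {π : Perm (Fin (n + 1))}
    (hπ : π 0 = 0) : cycleCount π = cycleCountPos n π + 1 := by
  have hfix : Finset.univ.filter (fun x => π x = x) =
      insert 0 (Finset.univ.filter fun x : Fin (n + 1) => x ≠ 0 ∧ π x = x) := by
    ext x
    by_cases hx : x = 0 <;> simp [hx, hπ]
  rw [cycleCount, cycleCountPos, fixedPointCount, fixedPointCountPos, hfix,
    Finset.card_insert_of_notMem (by simp), add_assoc]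

end cycleCount

/-- for every permutation π of {1,…,n} (extended to {0,…,n} by fixing 0),
2·c(π) ≤ n − 1 + c(overline(π)), where c(π) counts the cycles of π as a permutation of
{1,…,n} and c(overline(π)) those of overline(π) on {0,1,…,n}. -/
theorem two_c_le (n : ℕ) (π : Equiv.Perm (Fin (n + 1))) (hπ : π 0 = 0) :
    (2 * cycleCountPos n π : ℤ) ≤ (n : ℤ) - 1 + cycleCount (ob n π) := by
  have hob : rho n * π * (rho n)⁻¹ * π⁻¹ = ob n π := by simp only [ob, mul_assoc]
  have hsub := cycleCount_add_le (rho n * π * (rho n)⁻¹) π⁻¹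
  rw [hob, cycleCount_conj, cycleCount_inv, cycleCount_eq_cycleCountPos_add_one hπ] at hsub
  omega
end

section
/- Let π be a 2-permutation of {1,2,…,n}, i.e. a permutation such that every cycle of the permutation overline(π) of {0,1,…,n} has length exactly 2. Then the number of descents of π, i.e. the number of indices i with 2 ≤ i ≤ n and π_i < π_{i−1}, equals (n+1)/2. -/
open Fin.NatCast

open Finset

theorem two_mul_card_filter_lt_apply {α : Type*} [Fintype α] [LinearOrder α] {f : α → α}
    (hfix : ∀ x, f x ≠ x) (hf : Function.Involutive f) :
    2 * #{x | x < f x} = Fintype.card α := by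
  have hswap : #{x | x < f x} = #{x | f x < x} :=
    card_nbij' f f (fun x hx => by simpa [hf x] using hx) (fun x hx => by simpa [hf x] using hx)
      (fun x _ => hf x) (fun x _ => hf x)
  have hsplit : (univ.filter fun x => ¬ x < f x) = univ.filter fun x => f x < x :=
    filter_congr fun x _ => by simpa using (hfix x).le_iff_lt
  rw [← card_univ, ← card_filter_add_card_filter_not (s := univ) (fun x => x < f x), hsplit,
    ← hswap, two_mul]

theorem Fin.lt_add_one_iff_of_ne_last {n : ℕ} {a b : Fin (n + 1)} (hb : b ≠ Fin.last n) :
    a < b + 1 ↔ a ≤ b := by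
  rw [Fin.lt_def, Fin.le_def, Fin.val_add_one, if_neg hb]
  omega

theorem Fin.natCast_sub_one {n i : ℕ} (hi : 1 ≤ i) :
    (((i - 1 : ℕ)) : Fin (n + 1)) = (i : Fin (n + 1)) - 1 := by
  rw [eq_sub_iff_add_eq, ← Nat.cast_add_one, Nat.sub_add_cancel hi]

theorem Fin.lt_iff_lt_add_one_or_eq_last {n : ℕ} {a b : Fin (n + 1)} (hab : a ≠ b) :
    a < b ↔ a < b + 1 ∨ b = Fin.last n := by
  by_cases hb : b = Fin.last n
  · simpa [hb] using Fin.lt_last_iff_ne_last.2 (hb ▸ hab)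
  · rw [Fin.lt_add_one_iff_of_ne_last hb, hab.le_iff_lt]
    simp [hb]

theorem ob_apply (n : ℕ) (π : Equiv.Perm (Fin (n + 1))) (x : Fin (n + 1)) :
    ob n π x = π (π⁻¹ x - 1) + 1 := by
  simp [ob, rho, Equiv.Perm.mul_apply]

section

variable {n : ℕ} (π : Equiv.Perm (Fin (n + 1)))

def descents : Finset ℕ :=
  (Icc 2 n).filter fun i : ℕ => π (i : Fin (n + 1)) < π ((i - 1 : ℕ) : Fin (n + 1))

-- `j - 1` wraps around, so position `0` compares `π 0` with `π n`.
def cyclicDescents : Finset (Fin (n + 1)) := {j | π j < π (j - 1)}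

theorem card_filter_lt_ob_add_one (hn : n ≠ 0) :
    #{x | x < ob n π x} + 1 = #(cyclicDescents π) := by
  have hsub : ∀ j : Fin (n + 1), j ≠ j - 1 := by
    intro j h
    rw [eq_comm, sub_eq_self, Fin.one_eq_zero_iff] at h
    omega
  have hreindex : #{x | x < ob n π x} = #{j | π j < π (j - 1) + 1} :=
    card_nbij' (⇑π⁻¹) π (fun x hx => by simpa [ob_apply] using hx)
      (fun j hj => by simpa [ob_apply] using hj) (fun x _ => by simp) (fun j _ => by simp)
  have hlast : #{j | π (j - 1) = Fin.last n} = 1 := by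
    rw [card_eq_one]
    refine ⟨π⁻¹ (Fin.last n) + 1, ?_⟩
    ext j
    simp [← sub_eq_iff_eq_add, Equiv.eq_symm_apply]
  have hdisj : Disjoint (univ.filter fun j => π j < π (j - 1) + 1)
      (univ.filter fun j => π (j - 1) = Fin.last n) := by
    rw [disjoint_filter]
    intro j _ hlt heq
    simp [heq] at hlt
  have hsplit : cyclicDescents π =
      univ.filter fun j => π j < π (j - 1) + 1 ∨ π (j - 1) = Fin.last n :=
    filter_congr fun j _ => Fin.lt_iff_lt_add_one_or_eq_last (π.injective.ne (hsub j))
  rw [hreindex, hsplit, filter_or, card_union_of_disjoint hdisj, hlast]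

theorem card_cyclicDescents (hπ : π 0 = 0) (hn : n ≠ 0) :
    #(cyclicDescents π) = #(descents π) + 1 := by
  set g : ℕ → ℕ := fun i => if π (i : Fin (n + 1)) < π ((i : Fin (n + 1)) - 1) then 1 else 0
  have hsum : #(cyclicDescents π) = ∑ i ∈ range (n + 1), g i := by
    rw [← Fin.sum_univ_eq_sum_range, cyclicDescents, card_filter]
    simp only [g, Fin.cast_val_eq_self]
  have hwrap : π 0 < π (-1) := by
    rw [hπ, Fin.pos_iff_ne_zero, ← hπ, π.injective.ne_iff, neg_ne_zero, Ne, Fin.one_eq_zero_iff]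
    omega
  have hlinear : ∑ i ∈ Ico 2 (n + 1), g i = #(descents π) := by
    rw [descents, card_filter, Ico_add_one_right_eq_Icc]
    refine sum_congr rfl fun i hi => ?_
    rw [Fin.natCast_sub_one (by simp at hi; omega)]
  rw [hsum, ← sum_range_add_sum_Ico g (by omega : 2 ≤ n + 1), hlinear, add_comm]
  have hg0 : g 0 = 1 := by simp [g, hwrap]
  have hg1 : g 1 = 0 := by simp [g, hπ]
  rw [sum_range_succ, sum_range_one, hg0, hg1]

end

/-- if π is a 2-permutation of {1,…,n} (extended to {0,…,n} by fixing 0),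
i.e. every cycle of overline(π) has length exactly 2 (overline(π) is a fixed-point-free
involution), then the number of descents of π (indices i with 2 ≤ i ≤ n and
π_i < π_{i−1}) equals (n+1)/2. -/
theorem descents_of_two_permutation (n : ℕ) (π : Equiv.Perm (Fin (n + 1)))
    (hπ : π 0 = 0)
    (hfpf : ∀ x : Fin (n + 1), ob n π x ≠ x)
    (hinv : ∀ x : Fin (n + 1), ob n π (ob n π x) = x) :
    ((((Finset.Icc 2 n).filter fun i : ℕ =>
        π (i : Fin (n + 1)) < π ((i - 1 : ℕ) : Fin (n + 1))).card : ℚ)) =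
      ((n : ℚ) + 1) / 2 := by
  have hn : n ≠ 0 := by
    rintro rfl
    exact hfpf 0 (Fin.fin_one_eq_zero _)
  have hpairs := two_mul_card_filter_lt_apply hfpf hinv
  rw [Fintype.card_fin] at hpairs
  have hcyclic := card_filter_lt_ob_add_one π hn
  rw [card_cyclicDescents π hπ hn] at hcyclic
  change (#(descents π) : ℚ) = _
  rw [eq_div_iff two_ne_zero]
  norm_cast
  omega
end
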